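/- arXiv:2506.04767 — 4 statements merged into one kernel-verified Lean document; each statement's English description precedes it below -/
import Mathlib

section
/- For every μ ∈ (0,1), let P* be the two-point distribution assigning probability μ/2 to 1 and probability 1−μ/2 to ν' = μ/(2−μ). Then every feasible mechanism (x,p) satisfies ∫ p dP* ≤ μ/(2−μ). Consequently, the seller's optimal worst-case revenue satisfies z*(μ) ≤ μ/(2−μ). -/
open MeasureTheory Set

noncomputable section

/-- A Borel probability measure on ℝ supported on `[0,1]`. -/
def IsDistOn01 (P : Measure ℝ) : Prop :=
  IsProbabilityMeasure P ∧ P (Set.Icc (0:ℝ) 1)ᶜ = 0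

/-- Membership in the first-moment ambiguity set `P_μ`. -/
def MemAmb (μ : ℝ) (P : Measure ℝ) : Prop :=
  IsDistOn01 P ∧ ∫ ν, ν ∂P = μ

/-- A feasible single-agent mechanism: Borel measurable `x : [0,1] → [0,1]`, `p : [0,1] → ℝ`
satisfying (IC) and (IR). -/
structure Feasible (x p : ℝ → ℝ) : Prop where
  meas_x : Measurable x
  meas_p : Measurable p
  x_mem : ∀ ν ∈ Set.Icc (0:ℝ) 1, x ν ∈ Set.Icc (0:ℝ) 1
  ic : ∀ ν ∈ Set.Icc (0:ℝ) 1, ∀ νh ∈ Set.Icc (0:ℝ) 1, p ν ≤ ν * (x ν - x νh) + νh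
  ir : ∀ ν ∈ Set.Icc (0:ℝ) 1, p ν ≤ ν * x ν

/-- Worst-case expected payment of a payment rule `p` over the ambiguity set `P_μ`. -/
def worstCase (μ : ℝ) (p : ℝ → ℝ) : ℝ :=
  sInf {v : ℝ | ∃ P : Measure ℝ, MemAmb μ P ∧ v = ∫ ν, p ν ∂P}

/-- The seller's optimal worst-case revenue `z*(μ)`. -/
def zStar (μ : ℝ) : ℝ :=
  sSup {z : ℝ | ∃ x p : ℝ → ℝ, Feasible x p ∧ z = worstCase μ p}

/-- The two-point worst-case distribution assigning probability `μ/2` to `1`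
and probability `1 - μ/2` to `ν' = μ/(2-μ)`. -/
def Pstar (μ : ℝ) : Measure ℝ :=
  ENNReal.ofReal (μ/2) • Measure.dirac 1
    + ENNReal.ofReal (1 - μ/2) • Measure.dirac (μ/(2-μ))

def twoPoint (a s b t : ℝ) : Measure ℝ :=
  ENNReal.ofReal a • Measure.dirac s + ENNReal.ofReal b • Measure.dirac t

theorem integral_twoPoint {a b : ℝ} (ha : 0 ≤ a) (hb : 0 ≤ b) (s t : ℝ) (f : ℝ → ℝ) :
    ∫ ν, f ν ∂(twoPoint a s b t) = a * f s + b * f t := by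
  have integrable_smul_dirac (c u : ℝ) : Integrable f (ENNReal.ofReal c • Measure.dirac u) :=
    (integrable_dirac (by finiteness)).smul_measure ENNReal.ofReal_ne_top
  rw [twoPoint, integral_add_measure (integrable_smul_dirac _ _) (integrable_smul_dirac _ _),
    integral_smul_measure, integral_smul_measure, integral_dirac, integral_dirac,
    ENNReal.toReal_ofReal ha, ENNReal.toReal_ofReal hb, smul_eq_mul, smul_eq_mul]

theorem isDistOn01_twoPoint {a b s t : ℝ} (ha : 0 ≤ a) (hb : 0 ≤ b) (hab : a + b = 1)
    (hs : s ∈ Icc (0:ℝ) 1) (ht : t ∈ Icc (0:ℝ) 1) : IsDistOn01 (twoPoint a s b t) := by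
  refine ⟨⟨?_⟩, ?_⟩
  · simp [twoPoint, ← ENNReal.ofReal_add ha hb, hab]
  · simp [twoPoint, hs, ht]

theorem Feasible.two_point_revenue_le {x p : ℝ → ℝ} (hf : Feasible x p) {a b v : ℝ}
    (ha : 0 ≤ a) (hb : 0 ≤ b) (hv : v ∈ Icc (0:ℝ) 1) (hbv : b * v = a) :
    a * p 1 + b * p v ≤ a * (1 + v) := by
  have h1 : (1:ℝ) ∈ Icc (0:ℝ) 1 := right_mem_Icc.2 zero_le_one
  -- The high type deviates to `v`'s allocation; the low type's payment is capped by (IR).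
  have hic := mul_le_mul_of_nonneg_left (hf.ic 1 h1 v hv) ha
  have hir := mul_le_mul_of_nonneg_left (hf.ir v hv) hb
  have hx1 := mul_le_mul_of_nonneg_left (hf.x_mem 1 h1).2 ha
  calc a * p 1 + b * p v ≤ a * (1 * (x 1 - x v) + v) + b * (v * x v) := add_le_add hic hir
    _ = a * x 1 + a * v := by rw [← mul_assoc, hbv]; ring
    _ ≤ a * (1 + v) := by linarith

section Pstar

variable {μ : ℝ} (hμ : μ ∈ Icc (0:ℝ) 1)
include hμ

theorem div_two_sub_mem_Icc : μ/(2-μ) ∈ Icc (0:ℝ) 1 := by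
  have : 0 < 2 - μ := by linarith [hμ.2]
  exact ⟨div_nonneg hμ.1 this.le, (div_le_one this).2 (by linarith [hμ.2])⟩

theorem one_sub_half_mul_div_two_sub : (1 - μ/2) * (μ/(2-μ)) = μ/2 := by
  have : 2 - μ ≠ 0 := by linarith [hμ.2]
  field_simp

theorem integral_Pstar (f : ℝ → ℝ) :
    ∫ ν, f ν ∂(Pstar μ) = μ/2 * f 1 + (1 - μ/2) * f (μ/(2-μ)) :=
  integral_twoPoint (by linarith [hμ.1]) (by linarith [hμ.2]) _ _ f

theorem memAmb_Pstar : MemAmb μ (Pstar μ) := by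
  refine ⟨isDistOn01_twoPoint (by linarith [hμ.1]) (by linarith [hμ.2]) (by ring)
    (right_mem_Icc.2 zero_le_one) (div_two_sub_mem_Icc hμ), ?_⟩
  rw [integral_Pstar hμ, one_sub_half_mul_div_two_sub hμ]
  ring

theorem Feasible.integral_Pstar_le {x p : ℝ → ℝ} (hf : Feasible x p) :
    ∫ ν, p ν ∂(Pstar μ) ≤ μ/(2-μ) := by
  have : 2 - μ ≠ 0 := by linarith [hμ.2]
  calc ∫ ν, p ν ∂(Pstar μ) ≤ μ/2 * (1 + μ/(2-μ)) := by
        rw [integral_Pstar hμ]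
        exact hf.two_point_revenue_le (by linarith [hμ.1]) (by linarith [hμ.2])
          (div_two_sub_mem_Icc hμ) (one_sub_half_mul_div_two_sub hμ)
    _ = μ/(2-μ) := by field_simp; ring

end Pstar

-- `worstCase` is an `sInf` that may be unbounded below, hence the junk value `0` and `hc`.
theorem worstCase_le_of_memAmb {μ c : ℝ} {p : ℝ → ℝ} {P : Measure ℝ} (hP : MemAmb μ P)
    (hc : 0 ≤ c) (hPc : ∫ ν, p ν ∂P ≤ c) : worstCase μ p ≤ c := by
  by_cases hbdd : BddBelow {v : ℝ | ∃ P : Measure ℝ, MemAmb μ P ∧ v = ∫ ν, p ν ∂P}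
  · exact (csInf_le hbdd ⟨P, hP, rfl⟩).trans hPc
  · rwa [worstCase, Real.sInf_of_not_bddBelow hbdd]

/-- Under the two-point distribution `P*`, every feasible mechanism earns
at most `μ/(2-μ)` in expectation; consequently `z*(μ) ≤ μ/(2-μ)`. -/
theorem upper_bound_from_two_point_distribution
    (μ : ℝ) (hμ : μ ∈ Set.Ioo (0:ℝ) 1) :
    (∀ x p : ℝ → ℝ, Feasible x p → ∫ ν, p ν ∂(Pstar μ) ≤ μ/(2-μ)) ∧
    zStar μ ≤ μ/(2-μ) := by
  have hμ' : μ ∈ Icc (0:ℝ) 1 := Ioo_subset_Icc_self hμ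
  have hbound : 0 ≤ μ/(2-μ) := (div_two_sub_mem_Icc hμ').1
  refine ⟨fun x p hf => hf.integral_Pstar_le hμ', Real.sSup_le ?_ hbound⟩
  rintro z ⟨x, p, hf, rfl⟩
  exact worstCase_le_of_memAmb (memAmb_Pstar hμ') hbound (hf.integral_Pstar_le hμ')

end
end

section
/- Let k ∈ (0,1)^N satisfy Assumption 1. Then there exists a robustly optimal feasible mechanism (x,p) — i.e., one attaining z*(k) = sup over feasible mechanisms of inf over P ∈ P_k of ∫ p dP — such that (i) p(ν) = inf over ν̂ ∈ [0,ν] of { ν(x(ν) − x(ν̂)) + ν̂ } for all ν ∈ [0,1], and (ii) x is weakly increasing and concave on [0,1] with x(0) = 0 and x(1) = 1. -/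
/-!
Concavifying the allocation rule of a feasible mechanism keeps its payment rule feasible, and for
a concave nondecreasing allocation `x` with `x 0 = 0`, `x 1 = 1` the largest feasible payment is
`ν ↦ inf_{ν̂ ≤ ν} (ν (x ν - x ν̂) + ν̂)`, which is 2-Lipschitz on `[0,1]`. So a maximising sequence
of mechanisms may be taken of this form. Such allocations form a compact set for pointwise
convergence, so along an ultrafilter they converge to an allocation of the same kind. The maximal
payment is upper semicontinuous in the allocation, and equi-Lipschitz continuity makes the
resulting bound uniform on `[0,1]`; hence the limit mechanism guarantees at least `z*(k)` against
every distribution in `P_k`.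
-/

open MeasureTheory Set

noncomputable section

/-- Membership in the moment ambiguity set `P_k`: probability measures on `[0,1]`
whose first `N` moments are given by `k`. -/
def MemAmbN {N : ℕ} (k : Fin N → ℝ) (P : Measure ℝ) : Prop :=
  IsDistOn01 P ∧ ∀ i : Fin N, ∫ ν, ν^((i : ℕ) + 1) ∂P = k i

/-- Assumption 1: the ambiguity set is nonempty for all nearby moment vectors. -/
def Assumption1 {N : ℕ} (k : Fin N → ℝ) : Prop :=
  ∃ ε > 0, ∀ kh : Fin N → ℝ, (∀ i, kh i ∈ Set.Ioo (0:ℝ) 1) → ‖kh - k‖ < ε →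
    ∃ P : Measure ℝ, MemAmbN kh P

/-- Worst-case expected payment of a payment rule `p` over the ambiguity set `P_k`. -/
def worstCaseN {N : ℕ} (k : Fin N → ℝ) (p : ℝ → ℝ) : ℝ :=
  sInf {v : ℝ | ∃ P : Measure ℝ, MemAmbN k P ∧ v = ∫ ν, p ν ∂P}

/-- The seller's optimal worst-case revenue `z*(k)`. -/
def zStarN {N : ℕ} (k : Fin N → ℝ) : ℝ :=
  sSup {z : ℝ | ∃ x p : ℝ → ℝ, Feasible x p ∧ z = worstCaseN k p}

open Filter Topology Function
open scoped NNReal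

theorem eventually_sInf_image_lt_of_tendsto {ι α : Type*} {l : Filter ι} {s : Set α}
    {f : ι → α → ℝ} {g : α → ℝ} (hs : s.Nonempty) (hf : ∀ i, BddBelow (f i '' s))
    (hlim : ∀ a ∈ s, Tendsto (fun i => f i a) l (𝓝 (g a))) {c : ℝ} (hc : sInf (g '' s) < c) :
    ∀ᶠ i in l, sInf (f i '' s) < c := by
  obtain ⟨_, ⟨a, ha, rfl⟩, hac⟩ := exists_lt_of_csInf_lt (hs.image g) hc
  filter_upwards [(hlim a ha).eventually_lt_const hac] with i hi
  exact (csInf_le (hf i) (mem_image_of_mem _ ha)).trans_lt hi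

theorem eventually_forall_le_add_of_lipschitzOnWith {ι α : Type*} [PseudoMetricSpace α]
    {l : Filter ι} {s : Set α} (hs : IsCompact s) {K : ℝ≥0} {f : ι → α → ℝ} {g : α → ℝ}
    (hf : ∀ i, LipschitzOnWith K (f i) s) (hg : LipschitzOnWith K g s)
    (hfg : ∀ a ∈ s, ∀ ε > 0, ∀ᶠ i in l, f i a < g a + ε) {ε : ℝ} (hε : 0 < ε) :
    ∀ᶠ i in l, ∀ a ∈ s, f i a ≤ g a + ε := by
  set δ := ε / (4 * (K + 1))
  have hδ : 0 < δ := by positivity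
  have hKδ : 4 * (K * δ) ≤ ε := by
    have : 4 * ((K + 1) * δ) = ε := by simp only [δ]; field_simp
    nlinarith
  obtain ⟨t, hts, ht, hcover⟩ := hs.finite_cover_balls hδ
  filter_upwards [ht.eventually_all.2 fun b hb => hfg b (hts hb) (ε / 2) (half_pos hε)]
    with i hi a ha
  obtain ⟨b, hb, hab⟩ := mem_iUnion₂.1 (hcover ha)
  have hdist : K * dist a b ≤ K * δ := mul_le_mul_of_nonneg_left (Metric.mem_ball.1 hab).le K.2
  have hfab := (hf i).dist_le_mul a ha b (hts hb)
  have hgab := hg.dist_le_mul a ha b (hts hb)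
  rw [Real.dist_eq] at hfab hgab
  linarith [hi b hb, le_abs_self (f i a - f i b), neg_abs_le (g a - g b)]

theorem ConcaveOn.monotoneOn_Icc_of_le_right {f : ℝ → ℝ} {a b : ℝ}
    (hf : ConcaveOn ℝ (Icc a b) f) (hb : ∀ t ∈ Icc a b, f t ≤ f b) : MonotoneOn f (Icc a b) := by
  intro u hu v hv huv
  have hv' : v ∈ segment ℝ u b := by rw [segment_eq_Icc hu.2]; exact ⟨huv, hv.2⟩
  simpa only [min_eq_left (hb u hu)] using
    hf.ge_on_segment hu (right_mem_Icc.2 (hu.1.trans hu.2)) hv'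

theorem ConcaveOn.update_zero {f : ℝ → ℝ} {s : Set ℝ} (hf : ConcaveOn ℝ s f) (hs : s ⊆ Ici 0)
    (h0 : 0 ≤ f 0) : ConcaveOn ℝ s (update f 0 0) := by
  have hle : ∀ t, update f 0 0 t ≤ f t := fun t => by
    rcases eq_or_ne t 0 with rfl | ht
    · simpa using h0
    · rw [update_of_ne ht]
  refine ⟨hf.1, fun a ha b hb p q hp hq hpq => ?_⟩
  simp only [smul_eq_mul] at hpq ⊢
  by_cases hc : p * a + q * b = 0
  · obtain ⟨hpa, hqb⟩ :=
      (add_eq_zero_iff_of_nonneg (mul_nonneg hp (hs ha)) (mul_nonneg hq (hs hb))).1 hc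
    have hvanish : ∀ r c, r * c = 0 → r * update f 0 0 c = 0 := fun r c h => by
      rcases mul_eq_zero.1 h with rfl | rfl <;> simp
    rw [hc, hvanish p a hpa, hvanish q b hqb, update_self, add_zero]
  · rw [update_of_ne hc]
    calc p * update f 0 0 a + q * update f 0 0 b ≤ p * f a + q * f b := by
          gcongr <;> apply hle
      _ ≤ f (p * a + q * b) := hf.2 ha hb hp hq hpq

def concaveMajorant (s : Set ℝ) (f : ℝ → ℝ) (ν : ℝ) : ℝ :=
  sInf {c | ∃ a b : ℝ, (∀ t ∈ s, f t ≤ a * t + b) ∧ c = a * ν + b}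

section concaveMajorant

variable {s : Set ℝ} {f : ℝ → ℝ} {ν : ℝ}

theorem concaveMajorant_le {a b : ℝ} (hν : ν ∈ s) (hab : ∀ t ∈ s, f t ≤ a * t + b) :
    concaveMajorant s f ν ≤ a * ν + b :=
  csInf_le ⟨f ν, by rintro _ ⟨a', b', h, rfl⟩; exact h ν hν⟩ ⟨a, b, hab, rfl⟩

theorem le_concaveMajorant (hf : BddAbove (f '' s)) (hν : ν ∈ s) : f ν ≤ concaveMajorant s f ν := by
  obtain ⟨C, hC⟩ := hf
  refine le_csInf ⟨0 * ν + C, 0, C, fun t ht => ?_, rfl⟩ ?_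
  · simpa using hC (mem_image_of_mem f ht)
  · rintro _ ⟨a, b, h, rfl⟩
    exact h ν hν

theorem concaveOn_concaveMajorant (hs : Convex ℝ s) (hf : BddAbove (f '' s)) :
    ConcaveOn ℝ s (concaveMajorant s f) := by
  obtain ⟨C, hC⟩ := hf
  refine ⟨hs, fun u hu v hv p q hp hq hpq => le_csInf ⟨0 * _ + C, 0, C, fun t ht => ?_, rfl⟩ ?_⟩
  · simpa using hC (mem_image_of_mem f ht)
  · rintro _ ⟨a, b, h, rfl⟩
    calc p • concaveMajorant s f u + q • concaveMajorant s f v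
        ≤ p * (a * u + b) + q * (a * v + b) := by
          simp only [smul_eq_mul]
          gcongr <;> exact concaveMajorant_le ‹_› h
      _ = a * (p • u + q • v) + b := by simp only [smul_eq_mul]; linear_combination b * hpq

end concaveMajorant

/-- Only values on `[0,1]` matter for mechanisms; monotonicity on all of `ℝ` gives measurability
and the bounds on all of `ℝ` give compactness. -/
structure IsRegularAllocation (x : ℝ → ℝ) : Prop where
  monotone : Monotone x
  mem_Icc : ∀ ν, x ν ∈ Icc (0 : ℝ) 1
  concaveOn : ConcaveOn ℝ (Icc 0 1) x
  map_zero : x 0 = 0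
  map_one : x 1 = 1

namespace IsRegularAllocation

variable {x : ℝ → ℝ}

theorem of_tendsto {ι : Type*} {l : Filter ι} [l.NeBot] {x : ι → ℝ → ℝ} {y : ℝ → ℝ}
    (hx : ∀ i, IsRegularAllocation (x i)) (hlim : ∀ ν, Tendsto (fun i => x i ν) l (𝓝 (y ν))) :
    IsRegularAllocation y where
  monotone a b hab := le_of_tendsto_of_tendsto' (hlim a) (hlim b) fun i => (hx i).monotone hab
  mem_Icc ν := isClosed_Icc.mem_of_tendsto (hlim ν) (.of_forall fun i => (hx i).mem_Icc ν)
  concaveOn := ⟨convex_Icc 0 1, fun a ha b hb p q hp hq hpq =>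
    le_of_tendsto_of_tendsto' (((hlim a).const_smul p).add ((hlim b).const_smul q)) (hlim _)
      fun i => (hx i).concaveOn.2 ha hb hp hq hpq⟩
  map_zero := tendsto_nhds_unique (hlim 0) (tendsto_const_nhds.congr fun i => (hx i).map_zero.symm)
  map_one := tendsto_nhds_unique (hlim 1) (tendsto_const_nhds.congr fun i => (hx i).map_one.symm)

theorem exists_tendsto {ι : Type*} {x : ι → ℝ → ℝ} (hx : ∀ i, IsRegularAllocation (x i))
    (F : Ultrafilter ι) :
    ∃ y, IsRegularAllocation y ∧ ∀ ν, Tendsto (fun i => x i ν) F (𝓝 (y ν)) := by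
  obtain ⟨y, -, hy⟩ := (isCompact_univ_pi fun _ => isCompact_Icc).ultrafilter_le_nhds (F.map x)
    (by
      rw [Ultrafilter.coe_map, le_principal_iff]
      exact mem_map.2 (univ_mem' fun i => mem_univ_pi.2 (hx i).mem_Icc))
  rw [Ultrafilter.coe_map] at hy
  have hlim := tendsto_pi_nhds.1 hy
  exact ⟨y, of_tendsto hx hlim, hlim⟩

theorem mul_apply_le_mul_apply (hx : IsRegularAllocation x) {a b : ℝ} (hb : 0 ≤ b) (hba : b ≤ a)
    (ha : a ≤ 1) : b * x a ≤ a * x b := by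
  rcases (hb.trans hba).eq_or_lt with rfl | ha0
  · obtain rfl := le_antisymm hba hb
    rfl
  have h := hx.concaveOn.2 ⟨ha0.le, ha⟩ (left_mem_Icc.2 zero_le_one) (div_nonneg hb ha0.le)
    (sub_nonneg.2 ((div_le_one ha0).2 hba)) (add_sub_cancel _ _)
  simp only [smul_eq_mul, mul_zero, add_zero, hx.map_zero, div_mul_cancel₀ _ ha0.ne'] at h
  rwa [div_mul_eq_mul_div, div_le_iff₀ ha0, mul_comm (x b)] at h

theorem mul_apply_sub_mul_apply_le (hx : IsRegularAllocation x) {a b : ℝ} (hb : 0 ≤ b)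
    (hba : b ≤ a) (ha : a ≤ 1) : a * x a - b * x b ≤ 2 * (a - b) := by
  have hsub := hx.mul_apply_le_mul_apply hb hba ha
  have hab : 0 ≤ a - b := sub_nonneg.2 hba
  nlinarith [mul_le_mul_of_nonneg_left (hx.mem_Icc a).2 hab,
    mul_le_mul_of_nonneg_left (hx.mem_Icc b).2 hab]

end IsRegularAllocation

/-- The largest payment of type `ν` that is compatible with incentive compatibility against all
lower reports. -/
def maxPayment (x : ℝ → ℝ) (ν : ℝ) : ℝ :=
  sInf ((fun νh => ν * (x ν - x νh) + νh) '' Icc 0 ν)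

section maxPayment

variable {x : ℝ → ℝ} {ν : ℝ}

theorem bddBelow_maxPayment_image (hx : Monotone x) :
    BddBelow ((fun νh => ν * (x ν - x νh) + νh) '' Icc 0 ν) :=
  ⟨0, by
    rintro _ ⟨t, ht, rfl⟩
    have := mul_nonneg (ht.1.trans ht.2) (sub_nonneg.2 (hx ht.2))
    linarith [ht.1]⟩

theorem maxPayment_le (hx : Monotone x) {νh : ℝ} (hνh : νh ∈ Icc 0 ν) :
    maxPayment x ν ≤ ν * (x ν - x νh) + νh :=
  csInf_le (bddBelow_maxPayment_image hx) (mem_image_of_mem _ hνh)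

theorem le_maxPayment (hν : 0 ≤ ν) {c : ℝ} (h : ∀ νh ∈ Icc 0 ν, c ≤ ν * (x ν - x νh) + νh) :
    c ≤ maxPayment x ν :=
  le_csInf ((nonempty_Icc.2 hν).image _) (forall_mem_image.2 h)

theorem maxPayment_nonneg (hx : Monotone x) (hν : 0 ≤ ν) : 0 ≤ maxPayment x ν :=
  le_maxPayment hν fun _ ht => by nlinarith [hx ht.2, ht.1]

theorem maxPayment_le_mul (hx : Monotone x) (hx0 : x 0 = 0) (hν : 0 ≤ ν) :
    maxPayment x ν ≤ ν * x ν := by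
  simpa [hx0] using maxPayment_le hx (left_mem_Icc.2 hν)

theorem IsRegularAllocation.maxPayment_le_add (hx : IsRegularAllocation x) {a b : ℝ}
    (ha : a ∈ Icc (0 : ℝ) 1) (hb : b ∈ Icc (0 : ℝ) 1) :
    maxPayment x a ≤ maxPayment x b + 2 * |a - b| := by
  rcases le_total b a with hba | hab
  · rw [abs_of_nonneg (sub_nonneg.2 hba), ← sub_le_iff_le_add]
    refine le_maxPayment hb.1 fun t ht => ?_
    have := maxPayment_le hx.monotone ⟨ht.1, ht.2.trans hba⟩
    nlinarith [hx.mul_apply_sub_mul_apply_le hb.1 hba ha.2,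
      mul_nonneg (sub_nonneg.2 hba) (hx.mem_Icc t).1]
  · suffices maxPayment x a ≤ maxPayment x b + (b - a) by
      rw [abs_sub_comm, abs_of_nonneg (sub_nonneg.2 hab)]; linarith
    rw [← sub_le_iff_le_add]
    refine le_maxPayment hb.1 fun t ht => ?_
    rcases le_total t a with hta | hat
    · have := maxPayment_le hx.monotone ⟨ht.1, hta⟩
      nlinarith [mul_le_mul hab (hx.monotone hab) (hx.mem_Icc a).1 hb.1,
        mul_le_mul_of_nonneg_left (hx.mem_Icc t).2 (sub_nonneg.2 hab)]
    · have := maxPayment_le_mul hx.monotone hx.map_zero ha.1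
      nlinarith [mul_le_of_le_one_right ha.1 (hx.mem_Icc a).2,
        mul_nonneg hb.1 (sub_nonneg.2 (hx.monotone ht.2))]

theorem IsRegularAllocation.lipschitzOnWith_maxPayment (hx : IsRegularAllocation x) :
    LipschitzOnWith 2 (maxPayment x) (Icc 0 1) :=
  .of_le_add_mul 2 fun a ha b hb => by
    simpa [Real.dist_eq] using hx.maxPayment_le_add ha hb

theorem eventually_maxPayment_lt {ι : Type*} {l : Filter ι} {x : ι → ℝ → ℝ} {y : ℝ → ℝ}
    (hx : ∀ i, Monotone (x i)) (hlim : ∀ ν, Tendsto (fun i => x i ν) l (𝓝 (y ν))) (hν : 0 ≤ ν)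
    {c : ℝ} (hc : maxPayment y ν < c) : ∀ᶠ i in l, maxPayment (x i) ν < c :=
  eventually_sInf_image_lt_of_tendsto (nonempty_Icc.2 hν)
    (fun i => bddBelow_maxPayment_image (hx i))
    (fun t _ => (((hlim ν).sub (hlim t)).const_mul ν).add_const t) hc

end maxPayment

def payment (x : ℝ → ℝ) : ℝ → ℝ :=
  IccExtend zero_le_one ((Icc (0 : ℝ) 1).domRestrict (maxPayment x))

section payment

variable {x p : ℝ → ℝ}

theorem payment_of_mem {ν : ℝ} (hν : ν ∈ Icc (0 : ℝ) 1) : payment x ν = maxPayment x ν :=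
  IccExtend_of_mem _ _ hν

theorem IsRegularAllocation.payment_mem_Icc (hx : IsRegularAllocation x) (ν : ℝ) :
    payment x ν ∈ Icc (0 : ℝ) 1 := by
  rw [payment, IccExtend_apply]
  set μ := max 0 (min 1 ν)
  have hμ : μ ∈ Icc (0 : ℝ) 1 := ⟨le_max_left _ _, max_le zero_le_one (min_le_left _ _)⟩
  exact ⟨maxPayment_nonneg hx.monotone hμ.1, (maxPayment_le_mul hx.monotone hx.map_zero hμ.1).trans
    (mul_le_one₀ hμ.2 (hx.mem_Icc μ).1 (hx.mem_Icc μ).2)⟩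

theorem IsRegularAllocation.continuous_payment (hx : IsRegularAllocation x) :
    Continuous (payment x) :=
  continuous_IccExtend_iff.2 hx.lipschitzOnWith_maxPayment.continuousOn.domRestrict

theorem IsRegularAllocation.integrable_payment (hx : IsRegularAllocation x) (P : Measure ℝ)
    [IsFiniteMeasure P] : Integrable (payment x) P :=
  .of_bound hx.continuous_payment.aestronglyMeasurable 1 (.of_forall fun ν => by
    rw [Real.norm_eq_abs, abs_of_nonneg (hx.payment_mem_Icc ν).1]
    exact (hx.payment_mem_Icc ν).2)

/-- Incentive compatibility against higher reports comes for free from individual rationality,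
since `ν * x νh ≤ ν ≤ νh`. -/
theorem IsRegularAllocation.feasible_payment (hx : IsRegularAllocation x) :
    Feasible x (payment x) where
  meas_x := hx.monotone.measurable
  meas_p := hx.continuous_payment.measurable
  x_mem ν _ := hx.mem_Icc ν
  ic ν hν νh hνh := by
    rw [payment_of_mem hν]
    rcases le_total νh ν with hle | hle
    · exact maxPayment_le hx.monotone ⟨hνh.1, hle⟩
    · have := maxPayment_le_mul hx.monotone hx.map_zero hν.1
      nlinarith [mul_le_of_le_one_right hν.1 (hx.mem_Icc νh).2]
  ir ν hν := payment_of_mem hν ▸ maxPayment_le_mul hx.monotone hx.map_zero hν.1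

theorem Feasible.le_payment (h : Feasible x p) {ν : ℝ} (hν : ν ∈ Icc (0 : ℝ) 1) :
    p ν ≤ payment x ν :=
  payment_of_mem hν ▸ le_maxPayment hν.1 fun _ ht => h.ic ν hν _ ⟨ht.1, ht.2.trans hν.2⟩

end payment

/-- Taking the majorant of `max x id` rather than of `x` forces the value `1` at `1`. -/
def allocationMajorant (x : ℝ → ℝ) : ℝ → ℝ :=
  concaveMajorant (Icc 0 1) fun t => max (x t) t

def concavify (x : ℝ → ℝ) : ℝ → ℝ :=
  IccExtend zero_le_one ((Icc (0 : ℝ) 1).domRestrict (update (allocationMajorant x) 0 0))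

section concavify

variable {x p : ℝ → ℝ} {ν : ℝ}

theorem bddAbove_max_id_image (hx : ∀ ν ∈ Icc (0 : ℝ) 1, x ν ∈ Icc (0 : ℝ) 1) :
    BddAbove ((fun t => max (x t) t) '' Icc 0 1) :=
  ⟨1, forall_mem_image.2 fun t ht => max_le (hx t ht).2 ht.2⟩

theorem le_allocationMajorant (hx : ∀ ν ∈ Icc (0 : ℝ) 1, x ν ∈ Icc (0 : ℝ) 1)
    (hν : ν ∈ Icc (0 : ℝ) 1) : max (x ν) ν ≤ allocationMajorant x ν :=
  le_concaveMajorant (bddAbove_max_id_image hx) hν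

theorem allocationMajorant_mem_Icc (hx : ∀ ν ∈ Icc (0 : ℝ) 1, x ν ∈ Icc (0 : ℝ) 1)
    (hν : ν ∈ Icc (0 : ℝ) 1) : allocationMajorant x ν ∈ Icc (0 : ℝ) 1 :=
  ⟨hν.1.trans ((le_max_right _ _).trans (le_allocationMajorant hx hν)),
    (concaveMajorant_le (a := 0) (b := 1) hν fun t ht => by
      simpa using max_le (hx t ht).2 ht.2).trans_eq (by ring)⟩

theorem allocationMajorant_one (hx : ∀ ν ∈ Icc (0 : ℝ) 1, x ν ∈ Icc (0 : ℝ) 1) :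
    allocationMajorant x 1 = 1 :=
  le_antisymm (allocationMajorant_mem_Icc hx (right_mem_Icc.2 zero_le_one)).2
    ((le_max_right _ _).trans (le_allocationMajorant hx (right_mem_Icc.2 zero_le_one)))

theorem concaveOn_allocationMajorant (hx : ∀ ν ∈ Icc (0 : ℝ) 1, x ν ∈ Icc (0 : ℝ) 1) :
    ConcaveOn ℝ (Icc 0 1) (allocationMajorant x) :=
  concaveOn_concaveMajorant (convex_Icc 0 1) (bddAbove_max_id_image hx)

theorem concavify_of_mem (hν : ν ∈ Icc (0 : ℝ) 1) :
    concavify x ν = update (allocationMajorant x) 0 0 ν :=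
  IccExtend_of_mem _ _ hν

theorem monotoneOn_update_allocationMajorant (hx : ∀ ν ∈ Icc (0 : ℝ) 1, x ν ∈ Icc (0 : ℝ) 1) :
    MonotoneOn (update (allocationMajorant x) 0 0) (Icc 0 1) := by
  have hmono := (concaveOn_allocationMajorant hx).monotoneOn_Icc_of_le_right fun t ht =>
    (allocationMajorant_one hx).symm ▸ (allocationMajorant_mem_Icc hx ht).2
  intro u hu v hv huv
  rcases eq_or_ne u 0 with rfl | hu0
  · rcases eq_or_ne v 0 with rfl | hv0
    · rfl
    · simpa [hv0] using (allocationMajorant_mem_Icc hx hv).1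
  · have hv0 : v ≠ 0 := ((lt_of_le_of_ne hu.1 hu0.symm).trans_le huv).ne'
    simpa [hu0, hv0] using hmono hu hv huv

theorem isRegularAllocation_concavify (hx : ∀ ν ∈ Icc (0 : ℝ) 1, x ν ∈ Icc (0 : ℝ) 1) :
    IsRegularAllocation (concavify x) where
  monotone := (monotoneOn_iff_monotone.1 (monotoneOn_update_allocationMajorant hx)).IccExtend _
  mem_Icc ν := by
    rw [concavify, IccExtend_apply]
    rcases eq_or_ne (max 0 (min 1 ν)) 0 with h | h
    · simp [h]
    · simpa [h] using
        allocationMajorant_mem_Icc hx ⟨le_max_left _ _, max_le zero_le_one (min_le_left _ _)⟩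
  concaveOn := ((concaveOn_allocationMajorant hx).update_zero (fun _ ht => ht.1)
    (allocationMajorant_mem_Icc hx (left_mem_Icc.2 zero_le_one)).1).congr
      fun _ hν => (concavify_of_mem hν).symm
  map_zero := by simp [concavify_of_mem (left_mem_Icc.2 zero_le_one)]
  map_one := by
    simp [concavify_of_mem (right_mem_Icc.2 zero_le_one), allocationMajorant_one hx]

/-- Incentive compatibility of `(x, p)` says that, for `ν > 0`, the affine function
`t ↦ t / ν + x ν - p ν / ν` dominates `x` on `[0,1]`; by individual rationality it also
dominates `id`, hence it dominates the concavification. -/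
theorem feasible_concavify (h : Feasible x p) : Feasible (concavify x) p where
  meas_x := (isRegularAllocation_concavify h.x_mem).monotone.measurable
  meas_p := h.meas_p
  x_mem ν _ := (isRegularAllocation_concavify h.x_mem).mem_Icc ν
  ic ν hν νh hνh := by
    rcases hν.1.eq_or_lt with rfl | hν0
    · have := h.ir 0 hν
      simp only [zero_mul, zero_add] at this ⊢
      linarith [hνh.1]
    have hmaj : ∀ t ∈ Icc (0 : ℝ) 1, max (x t) t ≤ ν⁻¹ * t + (x ν - ν⁻¹ * p ν) := by
      intro t ht
      have hic := h.ic ν hν t ht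
      have hir := h.ir ν hν
      refine max_le ?_ ?_ <;> rw [← mul_le_mul_iff_of_pos_left hν0] <;> field_simp
      · linarith
      · nlinarith [ht.1, hν.2]
    have hνh_le : concavify x νh ≤ ν⁻¹ * νh + (x ν - ν⁻¹ * p ν) := by
      refine le_trans ?_ (concaveMajorant_le hνh hmaj)
      rw [concavify_of_mem hνh]
      rcases eq_or_ne νh 0 with rfl | hνh0
      · rw [update_self]; exact (allocationMajorant_mem_Icc h.x_mem hνh).1
      · rw [update_of_ne hνh0]; rfl
    have hν_ge : x ν ≤ concavify x ν := by
      rw [concavify_of_mem hν, update_of_ne hν0.ne']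
      exact (le_max_left _ _).trans (le_allocationMajorant h.x_mem hν)
    have := mul_le_mul_of_nonneg_left hνh_le hν0.le
    rw [mul_add, ← mul_assoc, mul_inv_cancel₀ hν0.ne', mul_sub, ← mul_assoc,
      mul_inv_cancel₀ hν0.ne'] at this
    linarith [mul_le_mul_of_nonneg_left hν_ge hν0.le]
  ir ν hν := by
    rcases hν.1.eq_or_lt with rfl | hν0
    · simpa using h.ir 0 hν
    refine (h.ir ν hν).trans (mul_le_mul_of_nonneg_left ?_ hν0.le)
    rw [concavify_of_mem hν, update_of_ne hν0.ne']
    exact (le_max_left _ _).trans (le_allocationMajorant h.x_mem hν)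

end concavify

section worstCase

variable {N : ℕ} {k : Fin N → ℝ} {P P₀ : Measure ℝ} {x p q : ℝ → ℝ}

theorem MemAmbN.ae_mem_Icc (hP : MemAmbN k P) : ∀ᵐ ν ∂P, ν ∈ Icc (0 : ℝ) 1 :=
  mem_ae_iff.2 hP.1.2

/-- `worstCaseN k p` is `0` when the expected payments are unbounded below, and an expected
payment is `0` when `p` is not integrable; both junk values stay below `∫ q ∂P` as `q ≥ 0`. -/
theorem worstCaseN_le_integral (hP : MemAmbN k P) (hpq : ∀ ν ∈ Icc (0 : ℝ) 1, p ν ≤ q ν)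
    (hq : ∀ ν ∈ Icc (0 : ℝ) 1, 0 ≤ q ν) (hqi : Integrable q P) :
    worstCaseN k p ≤ ∫ ν, q ν ∂P := by
  have hq0 : 0 ≤ ∫ ν, q ν ∂P := integral_nonneg_of_ae (hP.ae_mem_Icc.mono hq)
  by_cases hb : BddBelow {v : ℝ | ∃ P : Measure ℝ, MemAmbN k P ∧ v = ∫ ν, p ν ∂P}
  · refine (csInf_le hb ⟨P, hP, rfl⟩).trans ?_
    by_cases hpi : Integrable p P
    · exact integral_mono_ae hpi hqi (hP.ae_mem_Icc.mono hpq)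
    · rw [integral_undef hpi]; exact hq0
  · rw [worstCaseN, Real.sInf_of_not_bddBelow hb]; exact hq0

theorem Feasible.worstCaseN_le_one (h : Feasible x p) (hP : MemAmbN k P) : worstCaseN k p ≤ 1 := by
  have := hP.1.1
  simpa using worstCaseN_le_integral (q := fun _ => 1) hP
    (fun ν hν => (h.ir ν hν).trans (mul_le_one₀ hν.2 (h.x_mem ν hν).1 (h.x_mem ν hν).2))
    (fun _ _ => zero_le_one) (integrable_const 1)

theorem feasible_zero : Feasible (fun _ => 0) (fun _ => 0) where
  meas_x := measurable_const
  meas_p := measurable_const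
  x_mem _ _ := ⟨le_rfl, zero_le_one⟩
  ic _ _ _ hνh := by simpa using hνh.1
  ir _ _ := by simp

theorem bddAbove_worstCaseN (hP : MemAmbN k P) :
    BddAbove {z : ℝ | ∃ x p : ℝ → ℝ, Feasible x p ∧ z = worstCaseN k p} :=
  ⟨1, by rintro _ ⟨x, p, h, rfl⟩; exact h.worstCaseN_le_one hP⟩

theorem Feasible.worstCaseN_le_zStarN (h : Feasible x p) (hP : MemAmbN k P) :
    worstCaseN k p ≤ zStarN k :=
  le_csSup (bddAbove_worstCaseN hP) ⟨x, p, h, rfl⟩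

/-- Concavification keeps the old payment feasible, and `payment` dominates every feasible
payment. -/
theorem exists_regularAllocation_seq_tendsto_zStarN (hP₀ : MemAmbN k P₀) :
    ∃ (x : ℕ → ℝ → ℝ) (u : ℕ → ℝ), (∀ n, IsRegularAllocation (x n)) ∧
      Tendsto u atTop (𝓝 (zStarN k)) ∧ ∀ n P, MemAmbN k P → u n ≤ ∫ ν, payment (x n) ν ∂P := by
  obtain ⟨u, -, hu, huS⟩ := exists_seq_tendsto_sSup
    (S := {z : ℝ | ∃ x p : ℝ → ℝ, Feasible x p ∧ z = worstCaseN k p})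
    ⟨_, _, _, feasible_zero, rfl⟩ (bddAbove_worstCaseN hP₀)
  choose x p hfeas hup using huS
  have hreg n := isRegularAllocation_concavify (hfeas n).x_mem
  refine ⟨fun n => concavify (x n), u, hreg, hu, fun n P hP => ?_⟩
  have := hP.1.1
  rw [hup n]
  exact worstCaseN_le_integral hP (fun ν hν => (feasible_concavify (hfeas n)).le_payment hν)
    (fun ν _ => ((hreg n).payment_mem_Icc ν).1) ((hreg n).integrable_payment P)

end worstCase

/-- Reverse Fatou is not available along an ultrafilter; equi-Lipschitz continuity of the payments
makes their upper bound uniform instead. -/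
theorem IsRegularAllocation.le_integral_payment_of_tendsto {ι : Type*} {l : Filter ι} [l.NeBot]
    {x : ι → ℝ → ℝ} {y : ℝ → ℝ} (hx : ∀ i, IsRegularAllocation (x i)) (hy : IsRegularAllocation y)
    (hlim : ∀ ν, Tendsto (fun i => x i ν) l (𝓝 (y ν))) {P : Measure ℝ} [IsProbabilityMeasure P]
    (hP : ∀ᵐ ν ∂P, ν ∈ Icc (0 : ℝ) 1) {u : ι → ℝ} {z : ℝ} (hu : Tendsto u l (𝓝 z))
    (hle : ∀ i, u i ≤ ∫ ν, payment (x i) ν ∂P) : z ≤ ∫ ν, payment y ν ∂P := by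
  refine le_of_forall_pos_le_add fun ε hε => le_of_tendsto hu ?_
  have hunif : ∀ᶠ i in l, ∀ ν ∈ Icc (0 : ℝ) 1, maxPayment (x i) ν ≤ maxPayment y ν + ε :=
    eventually_forall_le_add_of_lipschitzOnWith isCompact_Icc
      (fun i => (hx i).lipschitzOnWith_maxPayment) hy.lipschitzOnWith_maxPayment
      (fun ν hν δ hδ => eventually_maxPayment_lt (fun i => (hx i).monotone) hlim hν.1
        (lt_add_of_pos_right _ hδ)) hε
  filter_upwards [hunif] with i hi
  calc u i ≤ ∫ ν, payment (x i) ν ∂P := hle i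
    _ ≤ ∫ ν, (payment y ν + ε) ∂P :=
      integral_mono_ae ((hx i).integrable_payment P)
        ((hy.integrable_payment P).add (integrable_const ε))
        (hP.mono fun ν hν => by simpa only [payment_of_mem hν] using hi ν hν)
    _ = ∫ ν, payment y ν ∂P + ε := by
      rw [integral_add (hy.integrable_payment P) (integrable_const ε), integral_const,
        probReal_univ, one_smul]

/-- There exists a robustly optimal feasible mechanism `(x,p)` whose payment
rule extracts the maximal feasible payment `p(ν) = inf_{ν̂ ≤ ν} {ν(x(ν)−x(ν̂)) + ν̂}`, and whose
allocation rule is weakly increasing and concave with `x(0) = 0` and `x(1) = 1`. -/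
theorem exists_robustly_optimal_mechanism
    {N : ℕ} (k : Fin N → ℝ) (hk : ∀ i, k i ∈ Set.Ioo (0:ℝ) 1)
    (hA : Assumption1 k) :
    ∃ x p : ℝ → ℝ, Feasible x p ∧ worstCaseN k p = zStarN k ∧
      (∀ ν ∈ Set.Icc (0:ℝ) 1,
        p ν = sInf ((fun νh => ν*(x ν - x νh) + νh) '' Set.Icc 0 ν)) ∧
      MonotoneOn x (Set.Icc 0 1) ∧
      ConcaveOn ℝ (Set.Icc 0 1) x ∧
      x 0 = 0 ∧ x 1 = 1 := by
  obtain ⟨ε, hε, hAk⟩ := hA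
  obtain ⟨P₀, hP₀⟩ := hAk k hk (by simpa using hε)
  obtain ⟨x, u, hx, hu, hle⟩ := exists_regularAllocation_seq_tendsto_zStarN hP₀
  obtain ⟨y, hy, hlim⟩ := IsRegularAllocation.exists_tendsto hx (.of atTop)
  have hopt : ∀ P, MemAmbN k P → zStarN k ≤ ∫ ν, payment y ν ∂P := fun P hP =>
    have := hP.1.1
    IsRegularAllocation.le_integral_payment_of_tendsto hx hy hlim hP.ae_mem_Icc
      (hu.mono_left (Ultrafilter.of_le _)) fun n => hle n P hP
  refine ⟨y, payment y, hy.feasible_payment, le_antisymm ?_ ?_, fun ν hν => payment_of_mem hν,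
    hy.monotone.monotoneOn _, hy.concaveOn, hy.map_zero, hy.map_one⟩
  · exact hy.feasible_payment.worstCaseN_le_zStarN hP₀
  · exact le_csInf ⟨_, P₀, hP₀, rfl⟩ fun _ ⟨P, hP, hv⟩ => hv ▸ hopt P hP

end
end

section
/- Let k ∈ (0,1)^N satisfy Assumption 1. Let p : [0,1] → ℝ be bounded and Borel measurable, and suppose P* ∈ P_k attains the minimum of ∫ p dP over P ∈ P_k, with minimum value ≥ 0. Then there exists λ = (λ₀, λ₁, …, λ_N) ∈ ℝ^{N+1} such that: (i) p(ν) ≥ Σ_{i=0}^{N} λ_i νⁱ for all ν ∈ [0,1], with equality P*-almost surely; (ii) if additionally p is the payment rule of a feasible mechanism, then λ₀ ≤ 0; and (iii) ∫ p dP* = Σ_{i=0}^{N} λ_i k_i, where k₀ = 1. -/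
/-!
Let `v = ∫ p dP*`. The set of pairs `(t, m)` such that some `P ∈ P_m` has `∫ p dP < t` is convex
(mixtures of distributions), misses `(v, k)` by minimality of `P*`, and, by Assumption 1 and the
boundedness of `p`, contains a neighbourhood of `(C + 1, k)`. Separating `(v, k)` from its interior
gives a supporting hyperplane `t + ℓ m ≥ v + ℓ k`, nonvertical because the set also contains points
directly above `(v, k)`. Testing it on Dirac measures `δ_ν`, i.e. on the points
`(p ν + s, (ν, …, ν^N))`, shows that the polynomial `v + ℓ k - ℓ (ν, …, ν^N)` lies below `p` on
`[0,1]`. Its `P*`-integral is `v`, so it agrees with `p` `P*`-a.s., and at `ν = 0` individual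
rationality gives `λ₀ ≤ p 0 ≤ 0`.
-/

open MeasureTheory Set

noncomputable section

/-- The extended moment vector `(k₀, k₁, …, k_N)` with `k₀ = 1`. -/
def kext {N : ℕ} (k : Fin N → ℝ) : Fin (N+1) → ℝ := Fin.cons 1 k

open Filter Topology

theorem Convex.exists_nonvertical_supporting_hyperplane {E : Type*} [AddCommGroup E]
    [Module ℝ E] [TopologicalSpace E] [IsTopologicalAddGroup E] [ContinuousSMul ℝ E]
    {S : Set (ℝ × E)} (hS : Convex ℝ S) (hup : ∀ z ∈ S, ∀ t, z.1 ≤ t → (t, z.2) ∈ S)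
    {v c : ℝ} {m : E} (hv : (v, m) ∉ S) (hc : (c, m) ∈ interior S) :
    ∃ ℓ : StrongDual ℝ E, ∀ z ∈ S, v + ℓ m ≤ z.1 + ℓ z.2 := by
  obtain ⟨f, hf⟩ := geometric_hahn_banach_open_point hS.interior isOpen_interior
    fun h => hv (interior_subset h)
  have hfS : ∀ z ∈ S, f z ≤ f (v, m) := by
    have hcl : S ⊆ closure (interior S) := by
      rw [hS.closure_interior_eq_closure_of_nonempty_interior ⟨_, hc⟩]
      exact subset_closure
    exact fun z hz => closure_minimal (fun x hx => (hf x hx).le)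
      (isClosed_Iic.preimage f.continuous) (hcl hz)
  have hsplit : ∀ z : ℝ × E, f z = f (1, 0) * z.1 + f (0, z.2) := by
    rintro ⟨t, x⟩
    have : ((t, x) : ℝ × E) = t • ((1 : ℝ), (0 : E)) + (0, x) := by simp
    rw [this, map_add, map_smul, smul_eq_mul, mul_comm]
    simp
  have hvc : v < c := lt_of_not_ge fun h => hv (hup _ (interior_subset hc) v h)
  have hα : f (1, 0) < 0 := by
    have hfc := hf _ hc
    rw [hsplit, hsplit (v, m)] at hfc
    nlinarith
  refine ⟨(f (1, 0))⁻¹ • f.comp (ContinuousLinearMap.inr ℝ ℝ E), fun z hz => ?_⟩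
  have hfz := hfS z hz
  rw [hsplit, hsplit (v, m)] at hfz
  have hdiv : ∀ (t : ℝ) (x : E),
      t + (f (1, 0))⁻¹ * f (0, x) = (f (1, 0))⁻¹ * (f (1, 0) * t + f (0, x)) := by
    intro t x
    rw [mul_add, inv_mul_cancel_left₀ hα.ne]
  simpa only [smul_apply, ContinuousLinearMap.comp_apply, ContinuousLinearMap.inr_apply,
    smul_eq_mul, hdiv] using mul_le_mul_of_nonpos_left hfz (inv_nonpos.2 hα.le)

theorem integral_ofReal_smul_add_ofReal_smul {α G : Type*} [MeasurableSpace α]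
    [NormedAddCommGroup G] [NormedSpace ℝ G] {μ ν : Measure α} {f : α → G} {a b : ℝ}
    (ha : 0 ≤ a) (hb : 0 ≤ b) (hμ : Integrable f μ) (hν : Integrable f ν) :
    ∫ x, f x ∂(ENNReal.ofReal a • μ + ENNReal.ofReal b • ν) = a • ∫ x, f x ∂μ + b • ∫ x, f x ∂ν := by
  rw [integral_add_measure (hμ.smul_measure ENNReal.ofReal_ne_top)
    (hν.smul_measure ENNReal.ofReal_ne_top), integral_smul_measure, integral_smul_measure,
    ENNReal.toReal_ofReal ha, ENNReal.toReal_ofReal hb]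

namespace IsDistOn01

variable {P : Measure ℝ}

theorem ae_mem_Icc (h : IsDistOn01 P) : ∀ᵐ ν ∂P, ν ∈ Icc (0 : ℝ) 1 :=
  ae_iff.2 h.2

theorem integrable {f : ℝ → ℝ} {C : ℝ} (h : IsDistOn01 P) (hf : Measurable f)
    (hC : ∀ ν ∈ Icc (0 : ℝ) 1, |f ν| ≤ C) : Integrable f P :=
  have := h.1
  (integrable_const C).mono' hf.aestronglyMeasurable <| h.ae_mem_Icc.mono hC

theorem integrable_pow (h : IsDistOn01 P) (j : ℕ) : Integrable (fun ν : ℝ => ν ^ j) P :=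
  h.integrable (measurable_id.pow_const j) fun ν hν => by
    rw [abs_pow]
    exact pow_le_one₀ (abs_nonneg ν) (abs_le.2 ⟨by linarith [hν.1], hν.2⟩)

theorem integrable_poly {n : ℕ} (h : IsDistOn01 P) (lam : Fin n → ℝ) :
    Integrable (fun ν : ℝ => ∑ i, lam i * ν ^ (i : ℕ)) P :=
  integrable_finsetSum _ fun _ _ => (h.integrable_pow _).const_mul _

theorem integral_le {f : ℝ → ℝ} {C : ℝ} (h : IsDistOn01 P)
    (hC : ∀ ν ∈ Icc (0 : ℝ) 1, |f ν| ≤ C) : ∫ ν, f ν ∂P ≤ C := by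
  have := h.1
  have := norm_integral_le_of_norm_le_const (f := f) (h.ae_mem_Icc.mono hC)
  rw [probReal_univ, mul_one] at this
  exact (le_abs_self _).trans this

theorem mix {P₁ P₂ : Measure ℝ} (h₁ : IsDistOn01 P₁) (h₂ : IsDistOn01 P₂) {a b : ℝ}
    (ha : 0 ≤ a) (hb : 0 ≤ b) (hab : a + b = 1) :
    IsDistOn01 (ENNReal.ofReal a • P₁ + ENNReal.ofReal b • P₂) := by
  have := h₁.1
  have := h₂.1
  refine ⟨⟨?_⟩, ?_⟩
  · simp [← ENNReal.ofReal_add ha hb, hab]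
  · simp [h₁.2, h₂.2]

theorem dirac {ν : ℝ} (hν : ν ∈ Icc (0 : ℝ) 1) : IsDistOn01 (Measure.dirac ν) :=
  ⟨inferInstance, by simp [Measure.dirac_apply' _ measurableSet_Icc.compl, hν]⟩

end IsDistOn01

def momentVec (N : ℕ) (ν : ℝ) : Fin N → ℝ := fun i => ν ^ ((i : ℕ) + 1)

theorem kext_momentVec {N : ℕ} (ν : ℝ) (i : Fin (N + 1)) :
    kext (momentVec N ν) i = ν ^ (i : ℕ) := by
  cases i using Fin.cases <;> simp [kext, momentVec]

namespace MemAmbN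

variable {N : ℕ} {k : Fin N → ℝ} {P : Measure ℝ}

theorem dirac {ν : ℝ} (hν : ν ∈ Icc (0 : ℝ) 1) : MemAmbN (momentVec N ν) (Measure.dirac ν) :=
  ⟨IsDistOn01.dirac hν, fun i => by simp [momentVec]⟩

theorem mix {k₁ k₂ : Fin N → ℝ} {P₁ P₂ : Measure ℝ} (h₁ : MemAmbN k₁ P₁) (h₂ : MemAmbN k₂ P₂)
    {a b : ℝ} (ha : 0 ≤ a) (hb : 0 ≤ b) (hab : a + b = 1) :
    MemAmbN (a • k₁ + b • k₂) (ENNReal.ofReal a • P₁ + ENNReal.ofReal b • P₂) := by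
  refine ⟨h₁.1.mix h₂.1 ha hb hab, fun i => ?_⟩
  rw [integral_ofReal_smul_add_ofReal_smul ha hb (h₁.1.integrable_pow _) (h₂.1.integrable_pow _),
    h₁.2, h₂.2]
  rfl

theorem integral_pow (h : MemAmbN k P) (i : Fin (N + 1)) :
    ∫ ν, ν ^ (i : ℕ) ∂P = kext k i := by
  have := h.1.1
  cases i using Fin.cases with
  | zero => simp [kext]
  | succ j => simpa [kext] using h.2 j

theorem integral_poly (h : MemAmbN k P) (lam : Fin (N + 1) → ℝ) :
    ∫ ν, ∑ i, lam i * ν ^ (i : ℕ) ∂P = ∑ i, lam i * kext k i := by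
  rw [integral_finsetSum _ fun _ _ => (h.1.integrable_pow _).const_mul _]
  simp_rw [integral_const_mul, h.integral_pow]

end MemAmbN

/-- The strict epigraph of the value function `m ↦ inf {∫ p dP | P ∈ P_m}`. -/
def revenueEpigraph (N : ℕ) (p : ℝ → ℝ) : Set (ℝ × (Fin N → ℝ)) :=
  {z | ∃ P, MemAmbN z.2 P ∧ ∫ ν, p ν ∂P < z.1}

section revenueEpigraph

variable {N : ℕ} {p : ℝ → ℝ}

theorem convex_revenueEpigraph (hp : Measurable p) {C : ℝ}
    (hC : ∀ ν ∈ Icc (0 : ℝ) 1, |p ν| ≤ C) : Convex ℝ (revenueEpigraph N p) := by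
  rintro ⟨t₁, k₁⟩ ⟨P₁, h₁, hlt₁⟩ ⟨t₂, k₂⟩ ⟨P₂, h₂, hlt₂⟩ a b ha hb hab
  refine ⟨_, h₁.mix h₂ ha hb hab, ?_⟩
  rw [integral_ofReal_smul_add_ofReal_smul ha hb (h₁.1.integrable hp hC) (h₂.1.integrable hp hC)]
  simp only [Prod.fst_add, Prod.smul_fst, smul_eq_mul] at hlt₁ hlt₂ ⊢
  rcases ha.eq_or_lt with rfl | ha
  · simp_all
  · nlinarith [mul_lt_mul_of_pos_left hlt₁ ha, mul_le_mul_of_nonneg_left hlt₂.le hb]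

theorem mk_mem_revenueEpigraph {z : ℝ × (Fin N → ℝ)} (hz : z ∈ revenueEpigraph N p) {t : ℝ}
    (ht : z.1 ≤ t) : (t, z.2) ∈ revenueEpigraph N p :=
  let ⟨P, hP, hlt⟩ := hz
  ⟨P, hP, hlt.trans_le ht⟩

theorem mk_momentVec_mem_revenueEpigraph {ν t : ℝ} (hν : ν ∈ Icc (0 : ℝ) 1) (ht : p ν < t) :
    (t, momentVec N ν) ∈ revenueEpigraph N p :=
  ⟨_, MemAmbN.dirac hν, by rwa [integral_dirac]⟩

theorem mk_mem_interior_revenueEpigraph {k : Fin N → ℝ} (hk : ∀ i, k i ∈ Ioo (0 : ℝ) 1)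
    (hA : Assumption1 k) {C : ℝ} (hC : ∀ ν ∈ Icc (0 : ℝ) 1, |p ν| ≤ C) :
    (C + 1, k) ∈ interior (revenueEpigraph N p) := by
  obtain ⟨ε, hε, hAk⟩ := hA
  have hU : univ.pi (fun _ => Ioo (0 : ℝ) 1) ∩ Metric.ball k ε ∈ 𝓝 k :=
    inter_mem ((isOpen_set_pi finite_univ fun _ _ => isOpen_Ioo).mem_nhds (mem_univ_pi.2 hk))
      (Metric.ball_mem_nhds k hε)
  refine mem_interior_iff_mem_nhds.2 (mem_of_superset (prod_mem_nhds (Ioi_mem_nhds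
    (lt_add_one C)) hU) ?_)
  rintro ⟨t, m⟩ ⟨ht, hm₀, hm⟩
  obtain ⟨P, hP⟩ := hAk m (mem_univ_pi.1 hm₀) (mem_ball_iff_norm.1 hm)
  exact ⟨P, hP, (hP.1.integral_le hC).trans_lt ht⟩

end revenueEpigraph

theorem sum_cons_mul_kext {N : ℕ} (c : ℝ) (ℓ : StrongDual ℝ (Fin N → ℝ)) (m : Fin N → ℝ) :
    ∑ i, (Fin.cons c fun j => -ℓ (Pi.single j 1) : Fin (N + 1) → ℝ) i * kext m i = c - ℓ m := by
  conv_rhs => rw [pi_eq_sum_univ' m, map_sum]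
  simp [Fin.sum_univ_succ, kext, mul_comm, sub_eq_add_neg]

theorem polynomial_payment_lemma_general
    {N : ℕ} (k : Fin N → ℝ) (hk : ∀ i, k i ∈ Set.Ioo (0:ℝ) 1)
    (hA : Assumption1 k)
    (p : ℝ → ℝ) (hmeas : Measurable p)
    (hbd : ∃ C : ℝ, ∀ ν ∈ Set.Icc (0:ℝ) 1, |p ν| ≤ C)
    (Pstar : Measure ℝ) (hPstar : MemAmbN k Pstar)
    (hmin : ∀ P : Measure ℝ, MemAmbN k P → ∫ ν, p ν ∂Pstar ≤ ∫ ν, p ν ∂P) :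
    ∃ lam : Fin (N+1) → ℝ,
      (∀ ν ∈ Set.Icc (0:ℝ) 1, (∑ i, lam i * ν^(i : ℕ)) ≤ p ν) ∧
      (∀ᵐ ν ∂Pstar, p ν = ∑ i, lam i * ν^(i : ℕ)) ∧
      ((∃ x : ℝ → ℝ, Feasible x p) → lam 0 ≤ 0) ∧
      (∫ ν, p ν ∂Pstar) = ∑ i, lam i * kext k i := by
  obtain ⟨C, hC⟩ := hbd
  set v := ∫ ν, p ν ∂Pstar
  have hv : (v, k) ∉ revenueEpigraph N p := fun ⟨P, hP, hlt⟩ => (hmin P hP).not_gt hlt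
  obtain ⟨ℓ, hℓ⟩ := (convex_revenueEpigraph hmeas hC).exists_nonvertical_supporting_hyperplane
    (fun _ hz _ ht => mk_mem_revenueEpigraph hz ht) hv (mk_mem_interior_revenueEpigraph hk hA hC)
  set lam : Fin (N + 1) → ℝ := Fin.cons (v + ℓ k) fun j => -ℓ (Pi.single j 1)
  have hlam : ∀ m, ∑ i, lam i * kext m i = v + ℓ k - ℓ m := sum_cons_mul_kext _ ℓ
  have hminor : ∀ ν ∈ Icc (0 : ℝ) 1, ∑ i, lam i * ν ^ (i : ℕ) ≤ p ν := by
    intro ν hν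
    simp_rw [← kext_momentVec ν, hlam]
    refine le_of_forall_pos_le_add fun s hs => ?_
    linarith [hℓ _ (mk_momentVec_mem_revenueEpigraph hν (lt_add_of_pos_right (p ν) hs))]
  have hrev : v = ∑ i, lam i * kext k i := by rw [hlam]; ring
  refine ⟨lam, hminor, ?_, ?_, hrev⟩
  · exact ((integral_eq_iff_of_ae_le (hPstar.1.integrable_poly lam)
      (hPstar.1.integrable hmeas hC) (hPstar.1.ae_mem_Icc.mono hminor)).1
      ((hPstar.integral_poly lam).trans hrev.symm)).symm
  · rintro ⟨x, hx⟩
    have h0 : (0 : ℝ) ∈ Icc (0 : ℝ) 1 := left_mem_Icc.2 zero_le_one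
    have hlam0 : ∑ i, lam i * (0 : ℝ) ^ (i : ℕ) = lam 0 := by simp [Fin.sum_univ_succ]
    linarith [hminor 0 h0, hx.ir 0 h0]

/-- If `p` is bounded and Borel measurable, and `P* ∈ P_k` attains the
minimum of `∫ p dP` over `P ∈ P_k`, with value ≥ 0, then there is a polynomial of degree `N`
minorizing `p`, touching it `P*`-a.s., with nonpositive constant term whenever `p` is the
payment rule of a feasible mechanism, and whose moment evaluation gives the seller's revenue. -/
theorem polynomial_payment_lemma
    {N : ℕ} (k : Fin N → ℝ) (hk : ∀ i, k i ∈ Set.Ioo (0:ℝ) 1)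
    (hA : Assumption1 k)
    (p : ℝ → ℝ) (hmeas : Measurable p)
    (hbd : ∃ C : ℝ, ∀ ν ∈ Set.Icc (0:ℝ) 1, |p ν| ≤ C)
    (Pstar : Measure ℝ) (hPstar : MemAmbN k Pstar)
    (hmin : ∀ P : Measure ℝ, MemAmbN k P → ∫ ν, p ν ∂Pstar ≤ ∫ ν, p ν ∂P)
    (hpos : 0 ≤ ∫ ν, p ν ∂Pstar) :
    ∃ lam : Fin (N+1) → ℝ,
      (∀ ν ∈ Set.Icc (0:ℝ) 1, (∑ i, lam i * ν^(i : ℕ)) ≤ p ν) ∧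
      (∀ᵐ ν ∂Pstar, p ν = ∑ i, lam i * ν^(i : ℕ)) ∧
      ((∃ x : ℝ → ℝ, Feasible x p) → lam 0 ≤ 0) ∧
      (∫ ν, p ν ∂Pstar) = ∑ i, lam i * kext k i :=
  polynomial_payment_lemma_general k hk hA p hmeas hbd Pstar hPstar hmin
end
end

section
/- Let J ∈ ℕ, J ≥ 1, and let K ∈ (0,1)^{N×J} satisfy Assumption 2. Let (x,p) be a J-agent mechanism whose aggregate payment ν ↦ Σ_{j=1}^{J} p_j(ν) is bounded and Borel measurable, and suppose P* ∈ P_K attains the minimum of ∫ Σ_{j=1}^{J} p_j(ν) dP(ν) over P ∈ P_K, with minimum value ≥ 0. Then there exist λ₀ ∈ ℝ and λ_{ij} ∈ ℝ for i = 1,…,N, j = 1,…,J such that: (i) Σ_{j=1}^{J} p_j(ν) ≥ Σ_{i=1}^{N} Σ_{j=1}^{J} λ_{ij} ν_jⁱ + λ₀ for all ν ∈ [0,1]^J, with equality P*-almost surely; (ii) if (x,p) is feasible then λ₀ ≤ 0; and (iii) ∫ Σ_{j=1}^{J} p_j dP* = Σ_{i=1}^{N} Σ_{j=1}^{J} λ_{ij}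 K_{ij} + λ₀. -/
/-!
The expected payment under `P` depends on `P` only through its moment matrix, so consider the
convex set `S` of pairs `(m, t)` such that some distribution on the cube has moments `m` and
expected aggregate payment at most `t`: the epigraph of the value function of the moment problem.
Minimality of `P*` puts `(K, ∫ p dP*)` on the boundary of `S`, while Assumption 2 and the bound on
the payment put `(K, t)` in its interior for large `t`. A supporting hyperplane at the boundary
point is therefore non-vertical, i.e. the graph of an affine function `m ↦ λ m + λ₀` lying below
`S`. Testing against Dirac masses gives the pointwise inequality; integrating against `P*` gives
equality in mean, hence almost surely; and evaluating at `ν = 0` under individual rationality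
gives `λ₀ ≤ 0`.
-/

open MeasureTheory Set

noncomputable section

/-- The type cube `[0,1]^J`. -/
def cube (J : ℕ) : Set (Fin J → ℝ) := {ν | ∀ j, ν j ∈ Set.Icc (0:ℝ) 1}

/-- A Borel probability measure on `ℝ^J` supported on `[0,1]^J`. -/
def IsDistOnCube {J : ℕ} (P : Measure (Fin J → ℝ)) : Prop :=
  IsProbabilityMeasure P ∧ P (cube J)ᶜ = 0

/-- Membership in the multi-agent moment ambiguity set `P_K`. -/
def MemAmbK {N J : ℕ} (K : Fin N → Fin J → ℝ) (P : Measure (Fin J → ℝ)) : Prop :=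
  IsDistOnCube P ∧ ∀ (i : Fin N) (j : Fin J), ∫ ν, (ν j)^((i : ℕ) + 1) ∂P = K i j

/-- Assumption 2: the ambiguity set is nonempty for all nearby moment matrices. -/
def Assumption2 {N J : ℕ} (K : Fin N → Fin J → ℝ) : Prop :=
  ∃ ε > 0, ∀ Kh : Fin N → Fin J → ℝ, (∀ i j, Kh i j ∈ Set.Ioo (0:ℝ) 1) → ‖Kh - K‖ < ε →
    ∃ P : Measure (Fin J → ℝ), MemAmbK Kh P

/-- A `J`-agent mechanism: measurable allocation and payment rules, nonnegative allocations
summing to at most one. -/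
structure MechanismJ {J : ℕ} (x p : Fin J → (Fin J → ℝ) → ℝ) : Prop where
  meas_x : ∀ j, Measurable (x j)
  meas_p : ∀ j, Measurable (p j)
  x_nonneg : ∀ j, ∀ ν ∈ cube J, 0 ≤ x j ν
  x_sum : ∀ ν ∈ cube J, (∑ j, x j ν) ≤ 1

/-- Feasibility: dominant-strategy incentive compatibility and ex-post individual
rationality. -/
structure FeasibleJ {J : ℕ} (x p : Fin J → (Fin J → ℝ) → ℝ)
    extends MechanismJ x p : Prop where
  ic : ∀ j, ∀ ν ∈ cube J, ∀ νh ∈ Set.Icc (0:ℝ) 1,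
    p j ν ≤ ν j * (x j ν - x j (Function.update ν j νh)) + νh
  ir : ∀ j, ∀ ν ∈ cube J, p j ν ≤ ν j * x j ν

open Filter Topology

theorem Convex.exists_supporting_affine_of_notMem_interior {E : Type*} [AddCommGroup E]
    [TopologicalSpace E] [Module ℝ E] [IsTopologicalAddGroup E] [ContinuousSMul ℝ E]
    {S : Set (E × ℝ)} (hS : Convex ℝ S) {k : E} {v t : ℝ} (hv : (k, v) ∉ interior S)
    (ht : (k, t) ∈ interior S) (hvt : v ≤ t) :
    ∃ (ψ : E →L[ℝ] ℝ) (c : ℝ), ψ k + c = v ∧ ∀ q ∈ S, ψ q.1 + c ≤ q.2 := by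
  obtain ⟨φ, hφ⟩ := geometric_hahn_banach_open_point hS.interior isOpen_interior hv
  have hφS : ∀ q ∈ S, φ q ≤ φ (k, v) := by
    intro q hq
    have hq' : q ∈ closure (interior S) := by
      rw [hS.closure_interior_eq_closure_of_nonempty_interior ⟨_, ht⟩]
      exact subset_closure hq
    exact closure_minimal (fun a ha => (hφ a ha).le)
      (isClosed_le φ.continuous continuous_const) hq'
  set ψ := φ.comp (ContinuousLinearMap.inl ℝ E ℝ)
  set μ := φ (0, 1)
  have hφ_apply : ∀ m s, φ (m, s) = ψ m + s * μ := by
    intro m s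
    rw [show (m, s) = (m, 0) + s • ((0 : E), (1 : ℝ)) by ext <;> simp, map_add, map_smul]
    simp [ψ, μ]
  -- `(k, t)` lies above `(k, v)` and strictly below the hyperplane, so it is not vertical
  have hμ : 0 < -μ := by
    have := hφ _ ht
    rw [hφ_apply, hφ_apply] at this
    nlinarith
  refine ⟨(-μ)⁻¹ • ψ, v - ((-μ)⁻¹ • ψ) k, add_sub_cancel _ _, ?_⟩
  rintro ⟨m, s⟩ hq
  have hle : ψ (m - k) ≤ (s - v) * -μ := by
    have := hφS _ hq
    rw [hφ_apply, hφ_apply] at this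
    rw [map_sub]
    linarith
  have hle' : ((-μ)⁻¹ • ψ) (m - k) ≤ s - v := by
    rwa [smul_apply, smul_eq_mul, inv_mul_le_iff₀ hμ, mul_comm]
  rw [map_sub] at hle'
  dsimp only
  linarith

theorem LinearMap.apply_eq_sum_sum_single {ι κ : Type*} [Fintype ι] [Fintype κ]
    [DecidableEq ι] [DecidableEq κ] (ψ : (ι → κ → ℝ) →ₗ[ℝ] ℝ) (m : ι → κ → ℝ) :
    ψ m = ∑ i, ∑ j, ψ (Pi.single i (Pi.single j 1)) * m i j := by
  have hm : m = ∑ i, ∑ j, m i j • (Pi.single i (Pi.single j 1) : ι → κ → ℝ) := by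
    ext i j
    simp [Finset.sum_apply, Pi.single_apply, ite_apply]
  conv_lhs => rw [hm]
  simp only [map_sum, map_smul, smul_eq_mul]
  exact Finset.sum_congr rfl fun i _ => Finset.sum_congr rfl fun j _ => mul_comm _ _

variable {N J : ℕ}

lemma zero_mem_cube : (0 : Fin J → ℝ) ∈ cube J := fun _ => ⟨le_rfl, zero_le_one⟩

lemma measurableSet_cube (J : ℕ) : MeasurableSet (cube J) := by
  have : cube J = univ.pi fun _ => Icc (0 : ℝ) 1 := by ext; simp only [cube, mem_univ_pi]; rfl
  exact this ▸ MeasurableSet.univ_pi fun _ => measurableSet_Icc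

namespace IsDistOnCube

variable {P P₁ P₂ : Measure (Fin J → ℝ)} {f : (Fin J → ℝ) → ℝ} {C : ℝ}

lemma ae_mem_cube (hP : IsDistOnCube P) : ∀ᵐ ν ∂P, ν ∈ cube J :=
  mem_ae_iff.2 hP.2

lemma integrable_of_abs_le (hP : IsDistOnCube P) (hf : AEStronglyMeasurable f P)
    (hC : ∀ ν ∈ cube J, |f ν| ≤ C) : Integrable f P := by
  have := hP.1
  refine (integrable_const C).mono' hf ?_
  filter_upwards [hP.ae_mem_cube] with ν hν
  exact hC ν hν

lemma integral_le_of_le (hP : IsDistOnCube P) (hf : Integrable f P)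
    (hC : ∀ ν ∈ cube J, f ν ≤ C) : ∫ ν, f ν ∂P ≤ C := by
  have := hP.1
  calc ∫ ν, f ν ∂P ≤ ∫ _, C ∂P :=
        integral_mono_ae hf (integrable_const C) (hP.ae_mem_cube.mono hC)
    _ = C := by simp

lemma integrable_pow (hP : IsDistOnCube P) (j : Fin J) (n : ℕ) :
    Integrable (fun ν => ν j ^ n) P := by
  refine hP.integrable_of_abs_le (C := 1) ((measurable_pi_apply j).pow_const n).aestronglyMeasurable
    fun ν hν => ?_
  rw [abs_pow]
  exact pow_le_one₀ (abs_nonneg _) (abs_le.2 ⟨by linarith [(hν j).1], (hν j).2⟩)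

lemma integrable_sum_sum_mul_pow (hP : IsDistOnCube P) (lam : Fin N → Fin J → ℝ) :
    Integrable (fun ν => ∑ i, ∑ j, lam i j * ν j ^ ((i : ℕ) + 1)) P :=
  integrable_finsetSum _ fun _ _ => integrable_finsetSum _ fun j _ =>
    (hP.integrable_pow j _).const_mul _

lemma mixture (hP₁ : IsDistOnCube P₁) (hP₂ : IsDistOnCube P₂) {a b : ℝ} (ha : 0 ≤ a)
    (hb : 0 ≤ b) (hab : a + b = 1) :
    IsDistOnCube (ENNReal.ofReal a • P₁ + ENNReal.ofReal b • P₂) := by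
  have := hP₁.1
  have := hP₂.1
  refine ⟨⟨?_⟩, ?_⟩
  · simp [← ENNReal.ofReal_add ha hb, hab]
  · simp [hP₁.2, hP₂.2]

end IsDistOnCube

lemma integral_ofReal_smul_add_ofReal_smul_s8 {α : Type*} [MeasurableSpace α]
    {μ₁ μ₂ : Measure α} {g : α → ℝ} (hg₁ : Integrable g μ₁) (hg₂ : Integrable g μ₂) {a b : ℝ}
    (ha : 0 ≤ a) (hb : 0 ≤ b) :
    ∫ x, g x ∂(ENNReal.ofReal a • μ₁ + ENNReal.ofReal b • μ₂) =
      a * ∫ x, g x ∂μ₁ + b * ∫ x, g x ∂μ₂ := by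
  rw [integral_add_measure (hg₁.smul_measure ENNReal.ofReal_ne_top)
      (hg₂.smul_measure ENNReal.ofReal_ne_top), integral_smul_measure, integral_smul_measure,
    ENNReal.toReal_ofReal ha, ENNReal.toReal_ofReal hb, smul_eq_mul, smul_eq_mul]

lemma MemAmbK.integral_sum_sum_mul_pow {K : Fin N → Fin J → ℝ} {P : Measure (Fin J → ℝ)}
    (hP : MemAmbK K P) (lam : Fin N → Fin J → ℝ) :
    ∫ ν, ∑ i, ∑ j, lam i j * ν j ^ ((i : ℕ) + 1) ∂P = ∑ i, ∑ j, lam i j * K i j := by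
  have hint (i : Fin N) (j : Fin J) := (hP.1.integrable_pow j ((i : ℕ) + 1)).const_mul (lam i j)
  rw [integral_finsetSum _ fun i _ => integrable_finsetSum _ fun j _ => hint i j]
  refine Finset.sum_congr rfl fun i _ => ?_
  rw [integral_finsetSum _ fun j _ => hint i j]
  exact Finset.sum_congr rfl fun j _ => by rw [integral_const_mul, hP.2 i j]

/-- The epigraph of the value function `m ↦ inf {∫ f dP | P ∈ P_m}` of the moment problem. -/
def momentEpigraph (N : ℕ) (f : (Fin J → ℝ) → ℝ) : Set ((Fin N → Fin J → ℝ) × ℝ) :=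
  {q | ∃ P, MemAmbK q.1 P ∧ Integrable f P ∧ ∫ ν, f ν ∂P ≤ q.2}

lemma convex_momentEpigraph (N : ℕ) (f : (Fin J → ℝ) → ℝ) :
    Convex ℝ (momentEpigraph N f) := by
  rintro ⟨m₁, t₁⟩ ⟨P₁, ⟨hP₁, hm₁⟩, hf₁, ht₁⟩ ⟨m₂, t₂⟩ ⟨P₂, ⟨hP₂, hm₂⟩, hf₂, ht₂⟩ a b ha hb hab
  refine ⟨ENNReal.ofReal a • P₁ + ENNReal.ofReal b • P₂, ⟨hP₁.mixture hP₂ ha hb hab,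
    fun i j => ?_⟩, (hf₁.smul_measure ENNReal.ofReal_ne_top).add_measure
      (hf₂.smul_measure ENNReal.ofReal_ne_top), ?_⟩
  · rw [integral_ofReal_smul_add_ofReal_smul_s8 (hP₁.integrable_pow j _) (hP₂.integrable_pow j _)
      ha hb, hm₁, hm₂]
    simp
  · rw [integral_ofReal_smul_add_ofReal_smul_s8 hf₁ hf₂ ha hb]
    simp only [Prod.snd_add, Prod.smul_snd, smul_eq_mul]
    gcongr

lemma mem_momentEpigraph_dirac (f : (Fin J → ℝ) → ℝ) {ν : Fin J → ℝ} (hν : ν ∈ cube J) :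
    ((fun (i : Fin N) j => ν j ^ ((i : ℕ) + 1)), f ν) ∈ momentEpigraph N f := by
  refine ⟨Measure.dirac ν, ⟨⟨inferInstance, ?_⟩, fun i j => by simp⟩,
    integrable_dirac (by simp), by simp⟩
  rw [Measure.dirac_apply' _ (measurableSet_cube J).compl]
  simp [hν]

lemma mk_mem_interior_momentEpigraph {K : Fin N → Fin J → ℝ}
    (hK : ∀ i j, K i j ∈ Ioo (0 : ℝ) 1) (hA : Assumption2 K) {f : (Fin J → ℝ) → ℝ}
    (hf : Measurable f) {C t : ℝ} (hC : ∀ ν ∈ cube J, |f ν| ≤ C) (ht : C < t) :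
    (K, t) ∈ interior (momentEpigraph N f) := by
  obtain ⟨ε, hε, hAK⟩ := hA
  have hK' : ∀ᶠ m in 𝓝 K, ∀ i j, m i j ∈ Ioo (0 : ℝ) 1 :=
    eventually_all.2 fun i => eventually_all.2 fun j =>
      ((continuous_apply j).comp (continuous_apply i)).continuousAt.eventually_mem
        (isOpen_Ioo.mem_nhds (hK i j))
  rw [mem_interior_iff_mem_nhds]
  filter_upwards [prod_mem_nhds (hK'.and (Metric.ball_mem_nhds K hε)) (Ioi_mem_nhds ht)]
  rintro ⟨m, s⟩ ⟨⟨hm, hmK⟩, hs⟩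
  obtain ⟨P, hP⟩ := hAK m hm (by rwa [← dist_eq_norm])
  have hfP := hP.1.integrable_of_abs_le hf.aestronglyMeasurable hC
  exact ⟨P, hP, hfP,
    (hP.1.integral_le_of_le hfP fun ν hν => (abs_le.1 (hC ν hν)).2).trans (le_of_lt hs)⟩

lemma mk_notMem_interior_momentEpigraph {K : Fin N → Fin J → ℝ} {f : (Fin J → ℝ) → ℝ}
    {P₀ : Measure (Fin J → ℝ)} (hmin : ∀ P, MemAmbK K P → ∫ ν, f ν ∂P₀ ≤ ∫ ν, f ν ∂P) :
    (K, ∫ ν, f ν ∂P₀) ∉ interior (momentEpigraph N f) := by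
  intro h
  have hnear : ∀ᶠ s in 𝓝 (∫ ν, f ν ∂P₀), (K, s) ∈ momentEpigraph N f :=
    (Continuous.prodMk_right K).continuousAt.eventually_mem (mem_interior_iff_mem_nhds.1 h)
  have hbelow : ∀ᶠ s in 𝓝[<] (∫ ν, f ν ∂P₀), (K, s) ∈ momentEpigraph N f :=
    nhdsWithin_le_nhds hnear
  obtain ⟨s, ⟨P, hP, -, hPs⟩, hs⟩ := (hbelow.and self_mem_nhdsWithin).exists
  exact (hmin P hP).not_gt (hPs.trans_lt hs)

lemma FeasibleJ.sum_apply_zero_nonpos {x p : Fin J → (Fin J → ℝ) → ℝ} (h : FeasibleJ x p) :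
    ∑ j, p j 0 ≤ 0 :=
  Finset.sum_nonpos fun j _ => by simpa using h.ir j 0 zero_mem_cube

theorem polynomial_payment_lemma_multiAgent_general
    {N J : ℕ} (K : Fin N → Fin J → ℝ)
    (hK : ∀ i j, K i j ∈ Set.Ioo (0:ℝ) 1) (hA : Assumption2 K)
    (x p : Fin J → (Fin J → ℝ) → ℝ) (hmech : MechanismJ x p)
    (hbd : ∃ C : ℝ, ∀ ν ∈ cube J, |∑ j, p j ν| ≤ C)
    (Pstar : Measure (Fin J → ℝ)) (hPstar : MemAmbK K Pstar)
    (hmin : ∀ P : Measure (Fin J → ℝ), MemAmbK K P →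
      ∫ ν, ∑ j, p j ν ∂Pstar ≤ ∫ ν, ∑ j, p j ν ∂P) :
    ∃ (lam0 : ℝ) (lam : Fin N → Fin J → ℝ),
      (∀ ν ∈ cube J,
        (∑ i, ∑ j, lam i j * (ν j)^((i : ℕ) + 1)) + lam0 ≤ ∑ j, p j ν) ∧
      (∀ᵐ ν ∂Pstar,
        (∑ j, p j ν) = (∑ i, ∑ j, lam i j * (ν j)^((i : ℕ) + 1)) + lam0) ∧
      (FeasibleJ x p → lam0 ≤ 0) ∧
      (∫ ν, ∑ j, p j ν ∂Pstar) = (∑ i, ∑ j, lam i j * K i j) + lam0 := by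
  obtain ⟨C, hC⟩ := hbd
  set f : (Fin J → ℝ) → ℝ := fun ν => ∑ j, p j ν
  have hf : Measurable f := Finset.measurable_sum _ fun j _ => hmech.meas_p j
  have hf_int : Integrable f Pstar := hPstar.1.integrable_of_abs_le hf.aestronglyMeasurable hC
  have hf_le : ∫ ν, f ν ∂Pstar ≤ C + 1 :=
    (hPstar.1.integral_le_of_le hf_int fun ν hν => (abs_le.1 (hC ν hν)).2).trans (by linarith)
  obtain ⟨ψ, c, hψK, hψ⟩ := (convex_momentEpigraph N f).exists_supporting_affine_of_notMem_interior
    (mk_notMem_interior_momentEpigraph hmin)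
    (mk_mem_interior_momentEpigraph hK hA hf hC (lt_add_one C)) hf_le
  set lam : Fin N → Fin J → ℝ := fun i j => ψ (Pi.single i (Pi.single j 1))
  have hψ_eq m : ψ m = ∑ i, ∑ j, lam i j * m i j := ψ.toLinearMap.apply_eq_sum_sum_single m
  have hle : ∀ ν ∈ cube J, (∑ i, ∑ j, lam i j * ν j ^ ((i : ℕ) + 1)) + c ≤ f ν :=
    fun ν hν => by simpa [hψ_eq] using hψ _ (mem_momentEpigraph_dirac f hν)
  have hmean : ∫ ν, f ν ∂Pstar = (∑ i, ∑ j, lam i j * K i j) + c := by rw [← hψK, hψ_eq]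
  refine ⟨c, lam, hle, ?_, fun hfeas => ?_, hmean⟩
  · have := hPstar.1.1
    have hpoly : Integrable (fun ν => (∑ i, ∑ j, lam i j * ν j ^ ((i : ℕ) + 1)) + c) Pstar :=
      (hPstar.1.integrable_sum_sum_mul_pow lam).add (integrable_const c)
    refine ((integral_eq_iff_of_ae_le hpoly hf_int (hPstar.1.ae_mem_cube.mono hle)).1 ?_).symm
    rw [integral_add (hPstar.1.integrable_sum_sum_mul_pow lam) (integrable_const c),
      hPstar.integral_sum_sum_mul_pow, hmean]
    simp
  · simpa using (hle 0 zero_mem_cube).trans hfeas.sum_apply_zero_nonpos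

/-- Multi-agent polynomial payment lemma: if the aggregate payment of a
mechanism is bounded and `P* ∈ P_K` attains the minimum (≥ 0) of its expectation over `P_K`,
then the aggregate payment dominates a multi-dimensional polynomial, touching it `P*`-a.s.,
with nonpositive constant term under feasibility, and the polynomial's moment evaluation
gives the seller's revenue. -/
theorem polynomial_payment_lemma_multiAgent
    {N J : ℕ} (hJ : 1 ≤ J) (K : Fin N → Fin J → ℝ)
    (hK : ∀ i j, K i j ∈ Set.Ioo (0:ℝ) 1) (hA : Assumption2 K)
    (x p : Fin J → (Fin J → ℝ) → ℝ) (hmech : MechanismJ x p)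
    (hbd : ∃ C : ℝ, ∀ ν ∈ cube J, |∑ j, p j ν| ≤ C)
    (Pstar : Measure (Fin J → ℝ)) (hPstar : MemAmbK K Pstar)
    (hmin : ∀ P : Measure (Fin J → ℝ), MemAmbK K P →
      ∫ ν, ∑ j, p j ν ∂Pstar ≤ ∫ ν, ∑ j, p j ν ∂P)
    (hpos : 0 ≤ ∫ ν, ∑ j, p j ν ∂Pstar) :
    ∃ (lam0 : ℝ) (lam : Fin N → Fin J → ℝ),
      (∀ ν ∈ cube J,
        (∑ i, ∑ j, lam i j * (ν j)^((i : ℕ) + 1)) + lam0 ≤ ∑ j, p j ν) ∧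
      (∀ᵐ ν ∂Pstar,
        (∑ j, p j ν) = (∑ i, ∑ j, lam i j * (ν j)^((i : ℕ) + 1)) + lam0) ∧
      (FeasibleJ x p → lam0 ≤ 0) ∧
      (∫ ν, ∑ j, p j ν ∂Pstar) = (∑ i, ∑ j, lam i j * K i j) + lam0 :=
  polynomial_payment_lemma_multiAgent_general K hK hA x p hmech hbd Pstar hPstar hmin

end
end
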